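/- Let x ∈ A with x ∉ F·1, and let u = c_0 + c_1 x + ⋯ + c_n x^n with c_0, …, c_n ∈ F and c_n ≠ 0. If u is solvable, then n = 1. (Lemma 3.7) -/

import Mathlib

open scoped BigOperators

/-- Defining relation of the Weyl algebra: `p * q = q * p + 1`. -/
inductive WeylRel (F : Type*) [CommRing F] :
    FreeAlgebra F (Fin 2) → FreeAlgebra F (Fin 2) → Prop
  | comm : WeylRel F (FreeAlgebra.ι F 0 * FreeAlgebra.ι F 1)
      (FreeAlgebra.ι F 1 * FreeAlgebra.ι F 0 + 1)

/-- The Weyl algebra over `F`. -/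
abbrev WeylAlgebra (F : Type*) [CommRing F] := RingQuot (WeylRel F)

variable (F : Type*) [Field F] [CharZero F]

/-- The generator `p` of the Weyl algebra. -/
noncomputable def Wp : WeylAlgebra F :=
  RingQuot.mkAlgHom F (WeylRel F) (FreeAlgebra.ι F 0)

/-- The generator `q` of the Weyl algebra. -/
noncomputable def Wq : WeylAlgebra F :=
  RingQuot.mkAlgHom F (WeylRel F) (FreeAlgebra.ι F 1)

/-- `x` is solvable if `[x, y] = 1` for some `y`. -/
def Solvable (x : WeylAlgebra F) : Prop := ∃ y : WeylAlgebra F, x * y - y * x = 1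

/-- The centralizer `C(x)`. -/
def Cset (x : WeylAlgebra F) : Set (WeylAlgebra F) := {y | x * y - y * x = 0}

/-- `N(x) = {y | (ad x)^n y = 0 for some n ≥ 1}`. -/
def Nset (x : WeylAlgebra F) : Set (WeylAlgebra F) :=
  {y | ∃ n : ℕ, 1 ≤ n ∧ (fun z => x * z - z * x)^[n] y = 0}

/-- `D(x) = {y | [x,y] = λ y for some scalar λ}`. -/
def Dset (x : WeylAlgebra F) : Set (WeylAlgebra F) :=
  {y | ∃ c : F, x * y - y * x = c • y}

def Delta1 : Set (WeylAlgebra F) :=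
  {x | x ∉ Set.range (algebraMap F (WeylAlgebra F)) ∧
    Nset F x = Set.univ ∧ Dset F x = Cset F x}

def Delta2 : Set (WeylAlgebra F) :=
  {x | x ∉ Set.range (algebraMap F (WeylAlgebra F)) ∧
    Nset F x ≠ Set.univ ∧ Nset F x ≠ Cset F x ∧ Dset F x = Cset F x}

/-- The graded component `A_s = {a | [pq, a] = s • a}`. -/
def Wgrade (s : ℤ) : Set (WeylAlgebra F) :=
  {a | (Wp F * Wq F) * a - a * (Wp F * Wq F) = s • a}

/-- The monomial `p^i q^j`. -/
noncomputable def Wmono (i j : ℕ) : WeylAlgebra F := Wp F ^ i * Wq F ^ j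

/-- `α` is the coordinate family of `x` in the basis `p^i q^j`. -/
def Represents (α : (ℕ × ℕ) →₀ F) (x : WeylAlgebra F) : Prop :=
  x = α.sum fun ij c => c • Wmono F ij.1 ij.2

/-- `v_{ρ,σ}(x) = max { iρ + jσ | (i,j) ∈ E(x) }`. -/
def vdeg (α : (ℕ × ℕ) →₀ F) (ρ σ : ℕ) : ℕ :=
  α.support.sup fun ij => ij.1 * ρ + ij.2 * σ

/-- `E_{ρ,σ}(x)`. -/
def Eset (α : (ℕ × ℕ) →₀ F) (ρ σ : ℕ) : Finset (ℕ × ℕ) :=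
  α.support.filter fun ij => ij.1 * ρ + ij.2 * σ = vdeg F α ρ σ

/-- The `(ρ,σ)`-polynomial of `x`, an element of `F[X,Y]`. -/
noncomputable def wpoly (α : (ℕ × ℕ) →₀ F) (ρ σ : ℕ) : MvPolynomial (Fin 2) F :=
  ∑ ij ∈ Eset F α ρ σ,
    MvPolynomial.monomial (Finsupp.single 0 ij.1 + Finsupp.single 1 ij.2) (α ij)

/-- The `(ρ,σ)`-term of `x`, an element of the Weyl algebra. -/
noncomputable def wterm (α : (ℕ × ℕ) →₀ F) (ρ σ : ℕ) : WeylAlgebra F :=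
  ∑ ij ∈ Eset F α ρ σ, α ij • Wmono F ij.1 ij.2

/-!
The Weyl algebra acts on formal Laurent series `∑ v(k) X ^ k`, i.e. on functions `v : ℤ → R`,
by `p = d/dX` and `q = X`. Each operator in the image is a difference operator
`δ_m ↦ ∑ s, c_s(m) δ_{m+s}` with polynomial coefficients `c_s`, which it determines in
characteristic zero. Give `m ^ d δ_{m+s}` the weight `2 d + s`, so that `p` and `q` have weight
`1`. The weight-`k` part of an operator is recorded by the Laurent polynomial
`∑ s, [m ^ ((k - s) / 2)] c_s • T ^ s`; this symbol is multiplicative with values in a domain.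
Since the image also preserves the series supported on `k ≥ 0`, all weights are nonnegative and
only scalars have weight `0`.

If `[f(x), y] = 1` with `f` of degree `n`, then `x` is not scalar, so it has a weight `d ≥ 1` and
a symbol `h ≠ 0`, and `[x, y] ≠ 0` has a weight `w ≥ 0` and a symbol `g ≠ 0`. In weight
`(n - 1) d + w` the symbol of `[f(x), y]` is `n c_n h ^ (n - 1) g ≠ 0`, while `1` has weight `0`.
Hence `(n - 1) d + w ≤ 0`, that is `n = 1`.
-/

open Polynomial

lemma pow_succ_mul_sub_mul_pow_succ {A : Type*} [Ring A] (x y : A) (i : ℕ) :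
    x ^ (i + 1) * y - y * x ^ (i + 1) = x * (x ^ i * y - y * x ^ i) + (x * y - y * x) * x ^ i := by
  rw [pow_succ']
  simp only [mul_sub, sub_mul, mul_assoc]
  abel

lemma sum_smul_mul_sub_mul_sum {R A ι : Type*} [CommRing R] [Ring A] [Algebra R A]
    (s : Finset ι) (a : ι → R) (x : ι → A) (y : A) :
    (∑ i ∈ s, a i • x i) * y - y * ∑ i ∈ s, a i • x i = ∑ i ∈ s, a i • (x i * y - y * x i) := by
  simp only [Finset.sum_mul, Finset.mul_sum, smul_mul_assoc, mul_smul_comm, smul_sub,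
    Finset.sum_sub_distrib]

namespace DiffOp

section Coeffs

variable {R : Type*} [CommRing R]

variable (R) in
/-- Multiplication by `p` followed by the shift by `s`; it sends `δ_m` to `p(m) δ_{m+s}`. -/
def shiftMul (s : ℤ) : R[X] →ₗ[R] Module.End R (ℤ → R) where
  toFun p :=
    { toFun v k := p.eval ((k - s : ℤ) : R) * v (k - s)
      map_add' v w := by ext k; simp [mul_add]
      map_smul' a v := by ext k; simp [mul_left_comm] }
  map_add' p q := by ext v k; simp [add_mul]
  map_smul' a p := by ext v k; simp [mul_assoc]

lemma shiftMul_apply (s : ℤ) (p : R[X]) (v : ℤ → R) (k : ℤ) :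
    shiftMul R s p v k = p.eval ((k - s : ℤ) : R) * v (k - s) :=
  rfl

lemma shiftMul_mul_shiftMul (s t : ℤ) (p q : R[X]) :
    shiftMul R s p * shiftMul R t q = shiftMul R (s + t) (taylor (t : R) p * q) := by
  ext v k
  simp only [Module.End.mul_apply, shiftMul_apply, eval_mul, taylor_eval, sub_add_eq_sub_sub]
  push_cast
  ring_nf

variable (R) in
noncomputable def ofCoeffs : (ℤ →₀ R[X]) →ₗ[R] Module.End R (ℤ → R) :=
  Finsupp.lsum R (shiftMul R)

lemma ofCoeffs_apply (c : ℤ →₀ R[X]) : ofCoeffs R c = c.sum fun s p => shiftMul R s p :=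
  Finsupp.lsum_apply _ _ _

lemma ofCoeffs_single (s : ℤ) (p : R[X]) : ofCoeffs R (Finsupp.single s p) = shiftMul R s p :=
  Finsupp.lsum_single _ _ _ _

lemma ofCoeffs_single_zero_one : ofCoeffs R (Finsupp.single 0 1) = 1 := by
  ext v k
  simp [ofCoeffs_single, shiftMul_apply]

lemma ofCoeffs_apply_single_add (c : ℤ →₀ R[X]) (m s : ℤ) :
    ofCoeffs R c (Pi.single m 1) (m + s) = (c s).eval (m : R) := by
  rw [ofCoeffs_apply, Finsupp.sum, LinearMap.sum_apply, Finset.sum_apply,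
    Finset.sum_eq_single s]
  · simp [shiftMul_apply]
  · intro t _ hts
    rw [shiftMul_apply, Pi.single_apply, if_neg (by omega), mul_zero]
  · intro hs
    rw [Finsupp.notMem_support_iff.mp hs, map_zero, LinearMap.zero_apply, Pi.zero_apply]

/-- Coefficients of the composite: `δ_m ↦ q(m) δ_{m+t} ↦ p(m + t) q(m) δ_{m+t+s}`. -/
noncomputable def coeffMul (c c' : ℤ →₀ R[X]) : ℤ →₀ R[X] :=
  c.sum fun s p => c'.sum fun t q => Finsupp.single (s + t) (taylor (t : R) p * q)

lemma ofCoeffs_coeffMul (c c' : ℤ →₀ R[X]) :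
    ofCoeffs R (coeffMul c c') = ofCoeffs R c * ofCoeffs R c' := by
  rw [ofCoeffs_apply c, ofCoeffs_apply c', Finsupp.sum, Finsupp.sum, Finset.sum_mul_sum,
    coeffMul, map_finsuppSum]
  refine Finset.sum_congr rfl fun s _ => ?_
  dsimp only
  rw [map_finsuppSum]
  exact Finset.sum_congr rfl fun t _ => by dsimp only; rw [ofCoeffs_single, shiftMul_mul_shiftMul]

variable [IsDomain R] [CharZero R]

lemma ofCoeffs_injective : Function.Injective (ofCoeffs R) := by
  intro c c' h
  ext1 s
  apply Polynomial.eq_of_infinite_eval_eq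
  refine (Set.infinite_range_of_injective (Int.cast_injective (α := R))).mono ?_
  rintro _ ⟨m, rfl⟩
  simp only [Set.mem_ofPred_eq, ← ofCoeffs_apply_single_add, h]

end Coeffs

section Symbol

variable {R : Type*} [CommRing R]

-- For even `j < 0` this is the junk value `p.coeff 0`; it is only used when
-- `j ≥ 2 * p.natDegree`.
noncomputable def evenCoeff (j : ℤ) : R[X] →ₗ[R] R :=
  if 2 ∣ j then lcoeff R (j / 2).toNat else 0

lemma evenCoeff_apply (j : ℤ) (p : R[X]) :
    evenCoeff j p = if 2 ∣ j then p.coeff (j / 2).toNat else 0 := by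
  unfold evenCoeff
  split_ifs <;> rfl

lemma evenCoeff_mul {p q : R[X]} {j j' : ℤ} (hp : 2 * (p.natDegree : ℤ) ≤ j)
    (hq : 2 * (q.natDegree : ℤ) ≤ j') :
    evenCoeff (j + j') (p * q) = evenCoeff j p * evenCoeff j' q := by
  simp only [evenCoeff_apply]
  by_cases hj : 2 ∣ j <;> by_cases hj' : 2 ∣ j'
  · rw [if_pos (dvd_add hj hj'), if_pos hj, if_pos hj',
      show ((j + j') / 2).toNat = (j / 2).toNat + (j' / 2).toNat by omega]
    exact coeff_mul_add_eq_of_natDegree_le (by omega) (by omega)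
  · rw [if_neg (by omega), if_neg hj', mul_zero]
  · rw [if_neg (by omega), if_neg hj, zero_mul]
  · rw [if_neg hj, zero_mul]
    split_ifs
    · exact coeff_eq_zero_of_natDegree_lt (natDegree_mul_le.trans_lt (by omega))
    · rfl

lemma coeff_taylor_of_natDegree_le {p : R[X]} {a : ℕ} (t : R) (h : p.natDegree ≤ a) :
    (taylor t p).coeff a = p.coeff a := by
  rcases h.eq_or_lt with rfl | h
  · rw [coeff_taylor_natDegree, coeff_natDegree]
  · rw [coeff_eq_zero_of_natDegree_lt h,
      coeff_eq_zero_of_natDegree_lt ((natDegree_taylor p t).trans_lt h)]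

lemma evenCoeff_taylor {p : R[X]} {j : ℤ} (t : R) (h : 2 * (p.natDegree : ℤ) ≤ j) :
    evenCoeff j (taylor t p) = evenCoeff j p := by
  simp only [evenCoeff_apply]
  split_ifs
  · exact coeff_taylor_of_natDegree_le t (by omega)
  · rfl

/-- The weight-`k` part of the principal symbol, as a Laurent polynomial in the shift. -/
noncomputable def symbolAt (k : ℤ) : (ℤ →₀ R[X]) →ₗ[R] LaurentPolynomial R :=
  Finsupp.lsum R fun s => AddMonoidAlgebra.lsingle s ∘ₗ evenCoeff (k - s)

lemma symbolAt_apply (k : ℤ) (c : ℤ →₀ R[X]) :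
    symbolAt k c = c.sum fun s p => AddMonoidAlgebra.single s (evenCoeff (k - s) p) :=
  Finsupp.lsum_apply _ _ _

lemma symbolAt_single (k s : ℤ) (p : R[X]) :
    symbolAt k (Finsupp.single s p) = AddMonoidAlgebra.single s (evenCoeff (k - s) p) := by
  simp [symbolAt]

lemma coeff_symbolAt (k : ℤ) (c : ℤ →₀ R[X]) (s : ℤ) :
    (symbolAt k c).coeff s = evenCoeff (k - s) (c s) := by
  rw [symbolAt_apply, Finsupp.sum, AddMonoidAlgebra.coeff_sum, Finsupp.finsetSum_apply,
    Finset.sum_eq_single s]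
  · rw [AddMonoidAlgebra.coeff_single, Finsupp.single_eq_same]
  · intro t _ hts
    rw [AddMonoidAlgebra.coeff_single, Finsupp.single_eq_of_ne hts.symm]
  · intro hs
    simp [Finsupp.notMem_support_iff.mp hs]

variable (R) in
def weightLE (k : ℤ) : Submodule R (ℤ →₀ R[X]) where
  carrier := {c | ∀ s (d : ℕ), k < 2 * (d : ℤ) + s → (c s).coeff d = 0}
  add_mem' ha hb s d h := by simp [ha s d h, hb s d h]
  zero_mem' := by simp
  smul_mem' a c hc s d h := by simp [hc s d h]

lemma weightLE_mono {k l : ℤ} (h : k ≤ l) : weightLE R k ≤ weightLE R l :=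
  fun _ hc s d hd => hc s d (by omega)

lemma two_mul_natDegree_add_le {k : ℤ} {c : ℤ →₀ R[X]} (hc : c ∈ weightLE R k) {s : ℤ}
    (hs : c s ≠ 0) : 2 * ((c s).natDegree : ℤ) + s ≤ k := by
  by_contra! hlt
  exact hs (leadingCoeff_eq_zero.mp (hc s _ hlt))

lemma single_mem_weightLE {k s : ℤ} {p : R[X]} (h : 2 * (p.natDegree : ℤ) + s ≤ k) :
    Finsupp.single s p ∈ weightLE R k := by
  intro s' d hd
  rw [Finsupp.single_apply]
  split_ifs with hs
  · exact coeff_eq_zero_of_natDegree_lt (by omega)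
  · rfl

lemma coeffMul_mem_weightLE {k l : ℤ} {c c' : ℤ →₀ R[X]} (hc : c ∈ weightLE R k)
    (hc' : c' ∈ weightLE R l) : coeffMul c c' ∈ weightLE R (k + l) := by
  refine Submodule.finsuppSum_mem _ _ _ _ fun s hs => ?_
  refine Submodule.finsuppSum_mem _ _ _ _ fun t ht => single_mem_weightLE ?_
  have := two_mul_natDegree_add_le hc hs
  have := two_mul_natDegree_add_le hc' ht
  have := natDegree_mul_le (p := taylor (t : R) (c s)) (q := c' t)
  rw [natDegree_taylor] at this
  omega

lemma symbolAt_eq_zero_of_lt {k l : ℤ} {c : ℤ →₀ R[X]} (hc : c ∈ weightLE R k) (hkl : k < l) :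
    symbolAt l c = 0 := by
  rw [symbolAt_apply]
  refine Finset.sum_eq_zero fun s _ => ?_
  dsimp only
  rw [evenCoeff_apply]
  split_ifs
  · rw [hc s _ (by omega), AddMonoidAlgebra.single_zero]
  · exact AddMonoidAlgebra.single_zero _

lemma symbolAt_coeffMul {k l : ℤ} {c c' : ℤ →₀ R[X]} (hc : c ∈ weightLE R k)
    (hc' : c' ∈ weightLE R l) :
    symbolAt (k + l) (coeffMul c c') = symbolAt k c * symbolAt l c' := by
  rw [coeffMul, map_finsuppSum, symbolAt_apply, symbolAt_apply, Finsupp.sum, Finsupp.sum,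
    Finsupp.sum, Finset.sum_mul_sum]
  refine Finset.sum_congr rfl fun s hs => ?_
  rw [map_finsuppSum, Finsupp.sum]
  refine Finset.sum_congr rfl fun t ht => ?_
  have hs := two_mul_natDegree_add_le hc (Finsupp.mem_support_iff.mp hs)
  have ht := two_mul_natDegree_add_le hc' (Finsupp.mem_support_iff.mp ht)
  rw [symbolAt_single, AddMonoidAlgebra.single_mul_single,
    show k + l - (s + t) = (k - s) + (l - t) by ring,
    evenCoeff_mul (by rw [natDegree_taylor]; omega) (by omega), evenCoeff_taylor _ (by omega)]

lemma exists_mem_weightLE_symbolAt_ne_zero {c : ℤ →₀ R[X]} (hc : c ≠ 0) :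
    ∃ s, c s ≠ 0 ∧ c ∈ weightLE R (2 * (c s).natDegree + s) ∧
      symbolAt (2 * (c s).natDegree + s) c ≠ 0 := by
  obtain ⟨s, hs, hmax⟩ := c.support.exists_max_image (fun s => 2 * ((c s).natDegree : ℤ) + s)
    (Finsupp.support_nonempty_iff.mpr hc)
  rw [Finsupp.mem_support_iff] at hs
  refine ⟨s, hs, fun t d hd => ?_, fun h0 => hs ?_⟩
  · by_contra hne
    have := hmax t (Finsupp.mem_support_iff.mpr fun h => hne (by simp [h]))
    have := le_natDegree_of_ne_zero hne
    omega
  · have := congrArg (fun σ => σ.coeff s) h0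
    simp only [coeff_symbolAt, add_sub_cancel_right, evenCoeff_apply, dvd_mul_right, if_true,
      AddMonoidAlgebra.coeff_zero, Finsupp.coe_zero, Pi.zero_apply] at this
    rwa [show (2 * ((c s).natDegree : ℤ) / 2).toNat = (c s).natDegree by omega, coeff_natDegree,
      leadingCoeff_eq_zero] at this

end Symbol

section HasSymbol

variable {R : Type*} [CommRing R]

def HasSymbol (D : Module.End R (ℤ → R)) (k : ℤ) (σ : LaurentPolynomial R) : Prop :=
  ∃ c ∈ weightLE R k, ofCoeffs R c = D ∧ symbolAt k c = σ

variable {D D' : Module.End R (ℤ → R)} {k l : ℤ} {σ σ' : LaurentPolynomial R}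

lemma hasSymbol_zero (k : ℤ) : HasSymbol (0 : Module.End R (ℤ → R)) k 0 :=
  ⟨0, zero_mem _, map_zero _, map_zero _⟩

lemma hasSymbol_one : HasSymbol (1 : Module.End R (ℤ → R)) 0 1 := by
  refine ⟨_, single_mem_weightLE (by simp), ofCoeffs_single_zero_one, ?_⟩
  rw [symbolAt_single, evenCoeff_apply, sub_zero, if_pos (dvd_zero 2), Int.zero_ediv,
    Int.toNat_zero, coeff_one_zero]
  rfl

lemma HasSymbol.add (h : HasSymbol D k σ) (h' : HasSymbol D' k σ') :
    HasSymbol (D + D') k (σ + σ') := by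
  obtain ⟨c, hc, rfl, rfl⟩ := h
  obtain ⟨c', hc', rfl, rfl⟩ := h'
  exact ⟨c + c', add_mem hc hc', map_add _ _ _, map_add _ _ _⟩

lemma HasSymbol.smul (h : HasSymbol D k σ) (a : R) : HasSymbol (a • D) k (a • σ) := by
  obtain ⟨c, hc, rfl, rfl⟩ := h
  exact ⟨a • c, Submodule.smul_mem _ a hc, map_smul _ _ _, map_smul _ _ _⟩

lemma HasSymbol.mul (h : HasSymbol D k σ) (h' : HasSymbol D' l σ') :
    HasSymbol (D * D') (k + l) (σ * σ') := by
  obtain ⟨c, hc, rfl, rfl⟩ := h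
  obtain ⟨c', hc', rfl, rfl⟩ := h'
  exact ⟨coeffMul c c', coeffMul_mem_weightLE hc hc', ofCoeffs_coeffMul c c',
    symbolAt_coeffMul hc hc'⟩

lemma HasSymbol.pow (h : HasSymbol D k σ) (j : ℕ) : HasSymbol (D ^ j) (j * k) (σ ^ j) := by
  induction j with
  | zero => simpa using hasSymbol_one
  | succ j ih =>
    rw [pow_succ, pow_succ, Nat.cast_succ, add_one_mul]
    exact ih.mul h

lemma HasSymbol.sum {ι : Type*} (s : Finset ι) {D : ι → Module.End R (ℤ → R)}
    {σ : ι → LaurentPolynomial R} (h : ∀ i ∈ s, HasSymbol (D i) k (σ i)) :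
    HasSymbol (∑ i ∈ s, D i) k (∑ i ∈ s, σ i) := by
  classical
  induction s using Finset.induction_on with
  | empty => simpa using hasSymbol_zero k
  | insert i s hi ih =>
    rw [Finset.sum_insert hi, Finset.sum_insert hi]
    exact (h i (Finset.mem_insert_self i s)).add
      (ih fun j hj => h j (Finset.mem_insert_of_mem hj))

lemma HasSymbol.of_lt (h : HasSymbol D k σ) (hkl : k < l) : HasSymbol D l 0 := by
  obtain ⟨c, hc, rfl, -⟩ := h
  exact ⟨c, weightLE_mono hkl.le hc, rfl, symbolAt_eq_zero_of_lt hc hkl⟩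

lemma HasSymbol.unique [IsDomain R] [CharZero R] (h : HasSymbol D k σ)
    (h' : HasSymbol D k σ') : σ = σ' := by
  obtain ⟨c, -, rfl, rfl⟩ := h
  obtain ⟨c', -, hc', rfl⟩ := h'
  rw [ofCoeffs_injective hc']

/-- `[X ^ (i + 1), Y] = X [X ^ i, Y] + [X, Y] X ^ i` gives the symbol `(i + 1) h ^ i g`. -/
lemma HasSymbol.commutator_pow {X Y : Module.End R (ℤ → R)} {d w : ℤ}
    {h g : LaurentPolynomial R} (hX : HasSymbol X d h) (hZ : HasSymbol (X * Y - Y * X) w g)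
    (i : ℕ) :
    HasSymbol (X ^ (i + 1) * Y - Y * X ^ (i + 1)) (i * d + w) ((i + 1 : R) • (h ^ i * g)) := by
  induction i with
  | zero => simpa using hZ
  | succ i ih =>
    have hcomm := hZ.mul (hX.pow (i + 1))
    rw [show w + ((i + 1 : ℕ) : ℤ) * d = d + (i * d + w) by push_cast; ring] at hcomm
    convert (hX.mul ih).add hcomm using 1
    · exact pow_succ_mul_sub_mul_pow_succ X Y (i + 1)
    · push_cast; ring
    · simp only [Algebra.smul_def, map_add, map_one, map_natCast]
      push_cast
      ring

lemma HasSymbol.polynomial_commutator {X Y : Module.End R (ℤ → R)} {d w : ℤ}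
    {h g : LaurentPolynomial R} (hX : HasSymbol X d h) (hd : 0 < d)
    (hZ : HasSymbol (X * Y - Y * X) w g) (c : ℕ → R) (m : ℕ) :
    HasSymbol ((∑ i ∈ Finset.range (m + 2), c i • X ^ i) * Y
        - Y * ∑ i ∈ Finset.range (m + 2), c i • X ^ i)
      (m * d + w) ((c (m + 1) * (m + 1)) • (h ^ m * g)) := by
  have hlow : ∀ i ∈ Finset.range (m + 1),
      HasSymbol (c i • (X ^ i * Y - Y * X ^ i)) (m * d + w) 0 := by
    rintro (_ | j) hj
    · simpa using hasSymbol_zero (R := R) (m * d + w)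
    · have hjm : (j : ℤ) < m := by simp at hj; omega
      exact ((hX.commutator_pow hZ j).smul (c (j + 1))).of_lt (by nlinarith)
  have htop := (HasSymbol.sum _ hlow).add ((hX.commutator_pow hZ m).smul (c (m + 1)))
  rw [← Finset.sum_range_succ, Finset.sum_const_zero, zero_add, smul_smul] at htop
  rwa [sum_smul_mul_sub_mul_sum _ c (X ^ ·)]

end HasSymbol

section Nonneg

variable {R : Type*} [CommRing R]

def PreservesNonneg (D : Module.End R (ℤ → R)) : Prop :=
  ∀ v : ℤ → R, (∀ k < 0, v k = 0) → ∀ k < 0, D v k = 0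

variable (R) in
def admissible : Subalgebra R (Module.End R (ℤ → R)) where
  carrier := {D | D ∈ LinearMap.range (ofCoeffs R) ∧ PreservesNonneg D}
  mul_mem' := fun ⟨⟨c, hc⟩, hD⟩ ⟨⟨c', hc'⟩, hD'⟩ =>
    ⟨⟨coeffMul c c', by rw [ofCoeffs_coeffMul, hc, hc']⟩, fun v hv => hD _ (hD' v hv)⟩
  add_mem' := fun ⟨hc, hD⟩ ⟨hc', hD'⟩ =>
    ⟨add_mem hc hc', fun v hv k hk => by simp [hD v hv k hk, hD' v hv k hk]⟩
  algebraMap_mem' r := by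
    rw [Set.mem_ofPred_eq, Algebra.algebraMap_eq_smul_one]
    exact ⟨⟨r • Finsupp.single 0 1, by rw [map_smul, ofCoeffs_single_zero_one]⟩,
      fun v hv k hk => by simp [hv k hk]⟩

variable [IsDomain R] [CharZero R]

/-- For `s < 0`, `c s` vanishes at `m = 0, …, -s - 1`: `δ_{m+s}` cannot occur in the image of
`δ_m`. -/
lemma natDegree_add_nonneg {c : ℤ →₀ R[X]} (hc : PreservesNonneg (ofCoeffs R c)) {s : ℤ}
    (hs : c s ≠ 0) : 0 ≤ ((c s).natDegree : ℤ) + s := by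
  classical
  rcases le_or_gt 0 s with h0 | h0
  · positivity
  have hroots : ((Finset.range (-s).toNat).image (Nat.cast : ℕ → R)).val ⊆ (c s).roots := by
    intro a ha
    obtain ⟨i, hi, rfl⟩ := Finset.mem_image.mp (Finset.mem_val.mp ha)
    rw [Finset.mem_range] at hi
    rw [mem_roots hs, IsRoot, ← Int.cast_natCast, ← ofCoeffs_apply_single_add]
    exact hc _ (fun k hk => Pi.single_eq_of_ne (by omega) _) _ (by omega)
  have := card_le_degree_of_subset_roots hroots
  rw [Finset.card_image_of_injective _ Nat.cast_injective, Finset.card_range] at this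
  omega

lemma exists_hasSymbol_ne_zero {D : Module.End R (ℤ → R)} (hD : D ∈ admissible R)
    (h0 : D ≠ 0) : ∃ k σ, 0 ≤ k ∧ σ ≠ 0 ∧ HasSymbol D k σ := by
  obtain ⟨⟨c, rfl⟩, hpos⟩ := hD
  have hc0 : c ≠ 0 := by
    rintro rfl
    exact h0 (map_zero _)
  obtain ⟨s, hs, hmem, hσ⟩ := exists_mem_weightLE_symbolAt_ne_zero hc0
  have := natDegree_add_nonneg hpos hs
  exact ⟨_, _, by omega, hσ, c, hmem, rfl, rfl⟩

lemma exists_eq_smul_one_of_hasSymbol_zero {D : Module.End R (ℤ → R)} (hD : PreservesNonneg D)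
    {σ : LaurentPolynomial R} (h : HasSymbol D 0 σ) : ∃ a : R, D = a • 1 := by
  obtain ⟨c, hc, rfl, -⟩ := h
  have hweight : ∀ s, c s ≠ 0 → s = 0 ∧ (c s).natDegree = 0 := fun s hs => by
    have := two_mul_natDegree_add_le hc hs
    have := natDegree_add_nonneg hD hs
    omega
  refine ⟨(c 0).coeff 0, ?_⟩
  suffices c = (c 0).coeff 0 • Finsupp.single 0 1 by
    conv_lhs => rw [this, map_smul, ofCoeffs_single_zero_one]
  ext1 s
  rw [Finsupp.smul_apply, Finsupp.single_apply]
  split_ifs with hs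
  · subst hs
    rw [smul_eq_C_mul, mul_one]
    by_cases h0 : c 0 = 0
    · simp [h0]
    · exact eq_C_of_natDegree_eq_zero (hweight 0 h0).2
  · rw [smul_zero]
    by_contra hne
    exact hs (hweight s hne).1.symm

lemma exists_pos_hasSymbol {D : Module.End R (ℤ → R)} (hD : D ∈ admissible R)
    (hne : ∀ a : R, D ≠ a • 1) : ∃ d h, 0 < d ∧ h ≠ 0 ∧ HasSymbol D d h := by
  obtain ⟨d, h, hd, hh, hDh⟩ := exists_hasSymbol_ne_zero hD (by simpa using hne 0)
  refine ⟨d, h, hd.lt_of_ne fun hd0 => ?_, hh, hDh⟩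
  obtain ⟨a, rfl⟩ := exists_eq_smul_one_of_hasSymbol_zero hD.2 (hd0 ▸ hDh)
  exact hne a rfl

end Nonneg

section Representation

variable (R : Type*) [CommRing R]

noncomputable def laurentDeriv : Module.End R (ℤ → R) := shiftMul R (-1) X

noncomputable def laurentMulX : Module.End R (ℤ → R) := shiftMul R 1 1

lemma laurentDeriv_mul_laurentMulX :
    laurentDeriv R * laurentMulX R = laurentMulX R * laurentDeriv R + 1 := by
  rw [laurentDeriv, laurentMulX, shiftMul_mul_shiftMul, shiftMul_mul_shiftMul,
    ← ofCoeffs_single_zero_one, ofCoeffs_single, neg_add_cancel, add_neg_cancel, ← map_add]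
  norm_num [taylor_X]

variable {R}

lemma laurentDeriv_mem_admissible : laurentDeriv R ∈ admissible R := by
  refine ⟨⟨_, ofCoeffs_single _ _⟩, fun v hv k hk => ?_⟩
  rw [laurentDeriv, shiftMul_apply]
  rcases eq_or_lt_of_le (show k ≤ -1 by omega) with rfl | hk
  · simp
  · rw [hv _ (by omega), mul_zero]

lemma laurentMulX_mem_admissible : laurentMulX R ∈ admissible R :=
  ⟨⟨_, ofCoeffs_single _ _⟩, fun v hv k hk => by
    rw [laurentMulX, shiftMul_apply, hv _ (by omega), mul_zero]⟩

variable (R) in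
/-- `p ↦ d/dX` and `q ↦ X` on formal Laurent series `∑ v(k) X ^ k`. -/
noncomputable def weylRep : WeylAlgebra R →ₐ[R] Module.End R (ℤ → R) :=
  RingQuot.liftAlgHom R ⟨FreeAlgebra.lift R ![laurentDeriv R, laurentMulX R], by
    rintro _ _ ⟨⟩
    simpa using laurentDeriv_mul_laurentMulX R⟩

lemma weylRep_mem_admissible (a : WeylAlgebra R) : weylRep R a ∈ admissible R := by
  obtain ⟨b, rfl⟩ := RingQuot.mkAlgHom_surjective R (WeylRel R) a
  rw [weylRep, RingQuot.liftAlgHom_mkAlgHom_apply]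
  induction b using FreeAlgebra.induction with
  | grade0 r =>
    rw [AlgHom.commutes]
    exact Subalgebra.algebraMap_mem _ r
  | grade1 i =>
    rw [FreeAlgebra.lift_ι_apply]
    fin_cases i
    exacts [laurentDeriv_mem_admissible, laurentMulX_mem_admissible]
  | mul a b ha hb =>
    rw [map_mul]
    exact mul_mem ha hb
  | add a b ha hb =>
    rw [map_add]
    exact add_mem ha hb

end Representation

end DiffOp

open DiffOp in
theorem deg_eq_one_of_solvable_polynomial (x : WeylAlgebra F)
    (n : ℕ) (c : ℕ → F) (hcn : c n ≠ 0)
    (u : WeylAlgebra F) (hu : u = ∑ i ∈ Finset.range (n + 1), c i • x ^ i)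
    (hsol : Solvable F u) :
    n = 1 := by
  obtain ⟨y, hy⟩ := hsol
  have hXY : (∑ i ∈ Finset.range (n + 1), c i • weylRep F x ^ i) * weylRep F y
      - weylRep F y * ∑ i ∈ Finset.range (n + 1), c i • weylRep F x ^ i = 1 := by
    simpa [hu, map_sum] using congrArg (weylRep F) hy
  have hZ : weylRep F (x * y - y * x) ≠ 0 := fun hZ => by
    rw [map_sub, map_mul, map_mul, sub_eq_zero] at hZ
    have hcomm : Commute (∑ i ∈ Finset.range (n + 1), c i • weylRep F x ^ i) (weylRep F y) :=
      Commute.sum_left _ _ _ fun i _ => ((Commute.pow_left hZ i).smul_left (c i))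
    exact one_ne_zero (hXY.symm.trans (sub_eq_zero.mpr hcomm.eq))
  obtain ⟨d, h, hd, hh, hXh⟩ :=
    exists_pos_hasSymbol (weylRep_mem_admissible x) fun a ha => hZ (by simp [ha])
  obtain ⟨w, g, hw, hg, hZg⟩ := exists_hasSymbol_ne_zero (weylRep_mem_admissible _) hZ
  rw [map_sub, map_mul, map_mul] at hZg
  obtain ⟨m, rfl⟩ : ∃ m, n = m + 1 := Nat.exists_eq_add_one.mpr (Nat.pos_of_ne_zero (by
    rintro rfl
    simp at hXY))
  have hsym := hXh.polynomial_commutator hd hZg c m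
  rw [hXY] at hsym
  have hσ : (c (m + 1) * (m + 1)) • (h ^ m * g) ≠ 0 :=
    smul_ne_zero (mul_ne_zero hcn (by exact_mod_cast m.succ_ne_zero))
      (mul_ne_zero (pow_ne_zero _ hh) hg)
  have hlevel : (m : ℤ) * d + w ≤ 0 := by
    by_contra! hpos
    exact hσ (hsym.unique (hasSymbol_one.of_lt hpos))
  nlinarith
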